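/- arXiv:2510.04973 — 7 statements merged into one kernel-verified Lean document; each statement's English description precedes it below -/
import Mathlib

section
/- Suppose {w_x}_{x∈D} is a feasible solution to the state-conversion problem {(σ_x, τ_x, O_x)}_{x∈D} over workspace W. Define σ_x^± := (σ_x ⊕ (±τ_x))/√2 ∈ V₁ ⊕ V₂, define Ō_x on M ⊕ M by Ō_x(u ⊕ v) := (O_x† v) ⊕ (O_x u), and define w_x^± := (w_x ⊕ (±(O_x ⊗ I_W) w_x))/√2 ∈ (M ⊗ W) ⊕ (M ⊗ W), identifying (M ⊕ M) ⊗ W with (M ⊗ W) ⊕ (M ⊗ W). Then for all x, y ∈ D: (a) Ō_x is unitary with Ō_x² = I; (b) ⟨σ_x^+, σ_x^-⟩ = 0; (c) (Ō_x ⊗ I_W) w_x^± = ± w_x^±; (d) ‖w_x^+‖ = ‖w_x^-‖ = ‖w_x‖; and (e) ⟨w_x^+, w_y^-⟩ = ⟨σ_x^+, σ_y^-⟩. -/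
/-!
For a unitary `U`, the involution `(a, b) ↦ (U† b, U a)` fixes the graph vector `(v, U v)` and
negates `(v, -U v)`; with `U = U_x := O_x ⊗ I_W` and `v = w_x` this gives the eigenvalue equations, and
Pythagoras gives the norms. Expanding the inner product,
`⟪w_x⁺, w_y⁻⟫ = (⟪w_x, w_y⟫ - ⟪U_x w_x, U_y w_y⟫) / 2 = ⟪w_x, ((I - O_x† O_y) ⊗ I_W) w_y⟫ / 2`,
which feasibility turns into `(⟪σ_x, σ_y⟫ - ⟪τ_x, τ_y⟫) / 2 = ⟪σ_x⁺, σ_y⁻⟫`; for `x = y` it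
vanishes because `U_x` is an isometry.
-/

open scoped InnerProductSpace

noncomputable section

variable {M : Type*} [NormedAddCommGroup M] [InnerProductSpace ℂ M]

/-- The operator `A ⊗ I_W` on `M ⊗ W`, where `W ≅ ℂ^m` and `M ⊗ ℂ^m` is modeled as the
Hilbert-space direct sum of `m` copies of `M` (the operator acts componentwise). -/
def tensorId (m : ℕ) (A : M →ₗ[ℂ] M) :
    PiLp 2 (fun _ : Fin m => M) →ₗ[ℂ] PiLp 2 (fun _ : Fin m => M) :=
  (WithLp.linearEquiv 2 ℂ (∀ _ : Fin m, M)).symm.toLinearMap ∘ₗ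
    (LinearMap.pi fun i => A ∘ₗ LinearMap.proj i) ∘ₗ
      (WithLp.linearEquiv 2 ℂ (∀ _ : Fin m, M)).toLinearMap

/-- The operator `u ⊕ v ↦ (A v) ⊕ (B u)` on the Hilbert-space direct sum `N ⊕ N`.
With `A = O†` and `B = O` this is the operator `Ō` of the statement. -/
def swapProdOp {N : Type*} [NormedAddCommGroup N] [InnerProductSpace ℂ N]
    (A B : N →ₗ[ℂ] N) : WithLp 2 (N × N) →ₗ[ℂ] WithLp 2 (N × N) :=
  (WithLp.linearEquiv 2 ℂ (N × N)).symm.toLinearMap ∘ₗ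
    ((A ∘ₗ LinearMap.snd ℂ N N).prod (B ∘ₗ LinearMap.fst ℂ N N)) ∘ₗ
      (WithLp.linearEquiv 2 ℂ (N × N)).toLinearMap

namespace LinearMap

variable {𝕜 E F : Type*} [RCLike 𝕜]
  [NormedAddCommGroup E] [InnerProductSpace 𝕜 E] [FiniteDimensional 𝕜 E]
  [NormedAddCommGroup F] [InnerProductSpace 𝕜 F] [FiniteDimensional 𝕜 F]
  {T : E →ₗ[𝕜] F}

theorem inner_map_map_of_adjoint_comp_self (h : adjoint T ∘ₗ T = id) (a b : E) :
    ⟪T a, T b⟫_𝕜 = ⟪a, b⟫_𝕜 := by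
  rw [← adjoint_inner_right, ← comp_apply, h, id_apply]

theorem norm_map_of_adjoint_comp_self (h : adjoint T ∘ₗ T = id) (a : E) : ‖T a‖ = ‖a‖ :=
  (norm_map_iff_inner_map_map T).2 (inner_map_map_of_adjoint_comp_self h) a

end LinearMap

section TensorId

variable (m : ℕ)

theorem tensorId_apply (A : M →ₗ[ℂ] M) (v : PiLp 2 (fun _ : Fin m => M)) (i : Fin m) :
    tensorId m A v i = A (v i) := rfl

theorem tensorId_id : tensorId m (LinearMap.id : M →ₗ[ℂ] M) = LinearMap.id := rfl

theorem tensorId_comp (A B : M →ₗ[ℂ] M) :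
    tensorId m (A ∘ₗ B) = tensorId m A ∘ₗ tensorId m B := rfl

theorem tensorId_sub (A B : M →ₗ[ℂ] M) :
    tensorId m (A - B) = tensorId m A - tensorId m B := rfl

variable [FiniteDimensional ℂ M]

theorem adjoint_tensorId (A : M →ₗ[ℂ] M) :
    LinearMap.adjoint (tensorId m A) = tensorId m (LinearMap.adjoint A) := by
  refine ((LinearMap.eq_adjoint_iff _ _).2 fun u v => ?_).symm
  simp only [PiLp.inner_apply, tensorId_apply, LinearMap.adjoint_inner_left]

theorem adjoint_tensorId_comp_tensorId {A : M →ₗ[ℂ] M}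
    (hA : LinearMap.adjoint A ∘ₗ A = LinearMap.id) :
    LinearMap.adjoint (tensorId m A) ∘ₗ tensorId m A = LinearMap.id := by
  rw [adjoint_tensorId, ← tensorId_comp, hA, tensorId_id]

theorem inner_tensorId_id_sub_adjoint_comp (A B : M →ₗ[ℂ] M)
    (u v : PiLp 2 (fun _ : Fin m => M)) :
    ⟪u, tensorId m (LinearMap.id - LinearMap.adjoint A ∘ₗ B) v⟫_ℂ =
      ⟪u, v⟫_ℂ - ⟪tensorId m A u, tensorId m B v⟫_ℂ := by
  rw [tensorId_sub, tensorId_comp, tensorId_id, ← adjoint_tensorId, LinearMap.sub_apply,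
    inner_sub_right, LinearMap.comp_apply, LinearMap.adjoint_inner_right, LinearMap.id_apply]

end TensorId

section SwapProdOp

variable {N : Type*} [NormedAddCommGroup N] [InnerProductSpace ℂ N] {A B : N →ₗ[ℂ] N}

theorem swapProdOp_apply (u : WithLp 2 (N × N)) :
    swapProdOp A B u = WithLp.toLp 2 (A u.snd, B u.fst) := rfl

theorem inner_swapProdOp_swapProdOp (hA : ∀ a b, ⟪A a, A b⟫_ℂ = ⟪a, b⟫_ℂ)
    (hB : ∀ a b, ⟪B a, B b⟫_ℂ = ⟪a, b⟫_ℂ) (u v : WithLp 2 (N × N)) :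
    ⟪swapProdOp A B u, swapProdOp A B v⟫_ℂ = ⟪u, v⟫_ℂ := by
  simp only [swapProdOp_apply, WithLp.prod_inner_apply, hA, hB]
  exact add_comm _ _

theorem swapProdOp_swapProdOp (hAB : A ∘ₗ B = LinearMap.id) (hBA : B ∘ₗ A = LinearMap.id)
    (u : WithLp 2 (N × N)) : swapProdOp A B (swapProdOp A B u) = u := by
  simp only [swapProdOp_apply, WithLp.toLp_fst, WithLp.toLp_snd, ← LinearMap.comp_apply, hAB,
    hBA, LinearMap.id_apply]
  rfl

theorem swapProdOp_toLp_self_apply (h : A ∘ₗ B = LinearMap.id) (v : N) :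
    swapProdOp A B (WithLp.toLp 2 (v, B v)) = WithLp.toLp 2 (v, B v) := by
  rw [swapProdOp_apply, WithLp.toLp_fst, WithLp.toLp_snd, ← LinearMap.comp_apply, h,
    LinearMap.id_apply]

theorem swapProdOp_toLp_neg_self_apply (h : A ∘ₗ B = LinearMap.id) (v : N) :
    swapProdOp A B (WithLp.toLp 2 (v, -B v)) = -WithLp.toLp 2 (v, -B v) := by
  rw [swapProdOp_apply, WithLp.toLp_fst, WithLp.toLp_snd, map_neg, ← LinearMap.comp_apply, h,
    LinearMap.id_apply, ← WithLp.toLp_neg, Prod.neg_mk, neg_neg]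

end SwapProdOp

section InvSqrtTwo

variable {E F : Type*} [NormedAddCommGroup E] [InnerProductSpace ℂ E]
  [NormedAddCommGroup F] [InnerProductSpace ℂ F]

theorem inner_inv_sqrt_two_smul_toLp_neg (a c : E) (b d : F) :
    ⟪((Real.sqrt 2 : ℂ))⁻¹ • WithLp.toLp 2 (a, b),
      ((Real.sqrt 2 : ℂ))⁻¹ • WithLp.toLp 2 (c, -d)⟫_ℂ = (⟪a, c⟫_ℂ - ⟪b, d⟫_ℂ) / 2 := by
  have h2 : ((Real.sqrt 2 : ℂ)) * (Real.sqrt 2 : ℂ) = 2 := by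
    rw [← Complex.ofReal_mul, Real.mul_self_sqrt zero_le_two, Complex.ofReal_ofNat]
  simp only [inner_smul_left, inner_smul_right, WithLp.prod_inner_apply, inner_neg_right,
    map_inv₀, Complex.conj_ofReal]
  rw [← mul_assoc, ← mul_inv, h2]
  ring

theorem norm_inv_sqrt_two_smul_toLp {a : E} {b : F} (h : ‖b‖ = ‖a‖) :
    ‖((Real.sqrt 2 : ℂ))⁻¹ • WithLp.toLp 2 (a, b)‖ = ‖a‖ := by
  refine (sq_eq_sq₀ (norm_nonneg _) (norm_nonneg _)).1 ?_
  rw [norm_smul, mul_pow, WithLp.prod_norm_sq_eq_of_L2, WithLp.toLp_fst, WithLp.toLp_snd, h,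
    norm_inv, Complex.norm_real, Real.norm_of_nonneg (Real.sqrt_nonneg 2), inv_pow,
    Real.sq_sqrt zero_le_two]
  ring

end InvSqrtTwo

theorem state_conversion_to_state_reflection_general
    {D : Type*}
    {V₁ : Type*} [NormedAddCommGroup V₁] [InnerProductSpace ℂ V₁]
    {V₂ : Type*} [NormedAddCommGroup V₂] [InnerProductSpace ℂ V₂]
    [FiniteDimensional ℂ M]
    (m : ℕ)
    (σ : D → V₁) (τ : D → V₂) (O : D → (M →ₗ[ℂ] M))
    (hOu : ∀ x, LinearMap.adjoint (O x) ∘ₗ O x = LinearMap.id)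
    (hOu' : ∀ x, O x ∘ₗ LinearMap.adjoint (O x) = LinearMap.id)
    (w : D → PiLp 2 (fun _ : Fin m => M))
    (hfeas : ∀ x y, ⟪σ x, σ y⟫_ℂ - ⟪τ x, τ y⟫_ℂ =
      ⟪w x, tensorId m ((LinearMap.id : M →ₗ[ℂ] M) - LinearMap.adjoint (O x) ∘ₗ O y) (w y)⟫_ℂ)
    (σp σm : D → WithLp 2 (V₁ × V₂))
    (hσp : ∀ x, σp x = ((Real.sqrt 2 : ℂ))⁻¹ • (WithLp.equiv 2 (V₁ × V₂)).symm (σ x, τ x))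
    (hσm : ∀ x, σm x = ((Real.sqrt 2 : ℂ))⁻¹ • (WithLp.equiv 2 (V₁ × V₂)).symm (σ x, -τ x))
    (wp wm : D → WithLp 2 (PiLp 2 (fun _ : Fin m => M) × PiLp 2 (fun _ : Fin m => M)))
    (hwp : ∀ x, wp x = ((Real.sqrt 2 : ℂ))⁻¹ •
      (WithLp.equiv 2 _).symm (w x, tensorId m (O x) (w x)))
    (hwm : ∀ x, wm x = ((Real.sqrt 2 : ℂ))⁻¹ •
      (WithLp.equiv 2 _).symm (w x, -(tensorId m (O x) (w x)))) :
    (∀ x (u v : WithLp 2 (M × M)),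
        ⟪swapProdOp (LinearMap.adjoint (O x)) (O x) u,
          swapProdOp (LinearMap.adjoint (O x)) (O x) v⟫_ℂ = ⟪u, v⟫_ℂ) ∧
    (∀ x (u : WithLp 2 (M × M)),
        swapProdOp (LinearMap.adjoint (O x)) (O x)
          (swapProdOp (LinearMap.adjoint (O x)) (O x) u) = u) ∧
    (∀ x, ⟪σp x, σm x⟫_ℂ = 0) ∧
    (∀ x, swapProdOp (tensorId m (LinearMap.adjoint (O x))) (tensorId m (O x)) (wp x) = wp x) ∧
    (∀ x, swapProdOp (tensorId m (LinearMap.adjoint (O x))) (tensorId m (O x)) (wm x) = -wm x) ∧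
    (∀ x, ‖wp x‖ = ‖w x‖ ∧ ‖wm x‖ = ‖w x‖) ∧
    (∀ x y, ⟪wp x, wm y⟫_ℂ = ⟪σp x, σm y⟫_ℂ) := by
  have hU x := adjoint_tensorId_comp_tensorId m (hOu x)
  have hU' x : tensorId m (LinearMap.adjoint (O x)) ∘ₗ tensorId m (O x) = LinearMap.id := by
    rw [← adjoint_tensorId, hU x]
  have hOadj x : LinearMap.adjoint (LinearMap.adjoint (O x)) ∘ₗ LinearMap.adjoint (O x) =
      LinearMap.id := by
    rw [LinearMap.adjoint_adjoint, hOu' x]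
  have hσ x y : ⟪σp x, σm y⟫_ℂ =
      (⟪w x, w y⟫_ℂ - ⟪tensorId m (O x) (w x), tensorId m (O y) (w y)⟫_ℂ) / 2 := by
    rw [hσp, hσm, WithLp.equiv_symm_apply, inner_inv_sqrt_two_smul_toLp_neg, hfeas,
      inner_tensorId_id_sub_adjoint_comp]
  have hnorm x : ‖tensorId m (O x) (w x)‖ = ‖w x‖ :=
    LinearMap.norm_map_of_adjoint_comp_self (hU x) (w x)
  refine ⟨fun x => inner_swapProdOp_swapProdOp
      (LinearMap.inner_map_map_of_adjoint_comp_self (hOadj x))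
      (LinearMap.inner_map_map_of_adjoint_comp_self (hOu x)),
    fun x => swapProdOp_swapProdOp (hOu x) (hOu' x), fun x => ?_, fun x => ?_, fun x => ?_,
    fun x => ⟨?_, ?_⟩, fun x y => ?_⟩
  · rw [hσ, LinearMap.inner_map_map_of_adjoint_comp_self (hU x), sub_self, zero_div]
  · rw [hwp, map_smul, WithLp.equiv_symm_apply, swapProdOp_toLp_self_apply (hU' x)]
  · rw [hwm, map_smul, WithLp.equiv_symm_apply, swapProdOp_toLp_neg_self_apply (hU' x), smul_neg]
  · rw [hwp, WithLp.equiv_symm_apply, norm_inv_sqrt_two_smul_toLp (hnorm x)]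
  · rw [hwm, WithLp.equiv_symm_apply, norm_inv_sqrt_two_smul_toLp (by rw [norm_neg, hnorm x])]
  · rw [hwp, hwm, WithLp.equiv_symm_apply, inner_inv_sqrt_two_smul_toLp_neg, hσ]

/-- A feasible solution `{w_x}` to a state-conversion problem
`{(σ_x, τ_x, O_x)}` over workspace `W ≅ ℂ^m` gives rise, via
`σ_x^± := (σ_x ⊕ ±τ_x)/√2`, `Ō_x(u ⊕ v) := (O_x† v) ⊕ (O_x u)`, and
`w_x^± := (w_x ⊕ ±(O_x ⊗ I_W) w_x)/√2`, to a feasible solution of the associated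
state-reflection problem: `Ō_x` is unitary with `Ō_x² = I`, `⟪σ_x⁺, σ_x⁻⟫ = 0`,
`(Ō_x ⊗ I_W) w_x^± = ± w_x^±`, `‖w_x^±‖ = ‖w_x‖`, and `⟪w_x⁺, w_y⁻⟫ = ⟪σ_x⁺, σ_y⁻⟫`. -/
theorem state_conversion_to_state_reflection
    {D : Type*} [Fintype D]
    {V₁ : Type*} [NormedAddCommGroup V₁] [InnerProductSpace ℂ V₁] [FiniteDimensional ℂ V₁]
    {V₂ : Type*} [NormedAddCommGroup V₂] [InnerProductSpace ℂ V₂] [FiniteDimensional ℂ V₂]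
    [FiniteDimensional ℂ M]
    (m : ℕ)
    (σ : D → V₁) (τ : D → V₂) (O : D → (M →ₗ[ℂ] M))
    (hOu : ∀ x, LinearMap.adjoint (O x) ∘ₗ O x = LinearMap.id)
    (hOu' : ∀ x, O x ∘ₗ LinearMap.adjoint (O x) = LinearMap.id)
    (w : D → PiLp 2 (fun _ : Fin m => M))
    (hfeas : ∀ x y, ⟪σ x, σ y⟫_ℂ - ⟪τ x, τ y⟫_ℂ =
      ⟪w x, tensorId m ((LinearMap.id : M →ₗ[ℂ] M) - LinearMap.adjoint (O x) ∘ₗ O y) (w y)⟫_ℂ)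
    (σp σm : D → WithLp 2 (V₁ × V₂))
    (hσp : ∀ x, σp x = ((Real.sqrt 2 : ℂ))⁻¹ • (WithLp.equiv 2 (V₁ × V₂)).symm (σ x, τ x))
    (hσm : ∀ x, σm x = ((Real.sqrt 2 : ℂ))⁻¹ • (WithLp.equiv 2 (V₁ × V₂)).symm (σ x, -τ x))
    (wp wm : D → WithLp 2 (PiLp 2 (fun _ : Fin m => M) × PiLp 2 (fun _ : Fin m => M)))
    (hwp : ∀ x, wp x = ((Real.sqrt 2 : ℂ))⁻¹ •
      (WithLp.equiv 2 _).symm (w x, tensorId m (O x) (w x)))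
    (hwm : ∀ x, wm x = ((Real.sqrt 2 : ℂ))⁻¹ •
      (WithLp.equiv 2 _).symm (w x, -(tensorId m (O x) (w x)))) :
    (∀ x (u v : WithLp 2 (M × M)),
        ⟪swapProdOp (LinearMap.adjoint (O x)) (O x) u,
          swapProdOp (LinearMap.adjoint (O x)) (O x) v⟫_ℂ = ⟪u, v⟫_ℂ) ∧
    (∀ x (u : WithLp 2 (M × M)),
        swapProdOp (LinearMap.adjoint (O x)) (O x)
          (swapProdOp (LinearMap.adjoint (O x)) (O x) u) = u) ∧
    (∀ x, ⟪σp x, σm x⟫_ℂ = 0) ∧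
    (∀ x, swapProdOp (tensorId m (LinearMap.adjoint (O x))) (tensorId m (O x)) (wp x) = wp x) ∧
    (∀ x, swapProdOp (tensorId m (LinearMap.adjoint (O x))) (tensorId m (O x)) (wm x) = -wm x) ∧
    (∀ x, ‖wp x‖ = ‖w x‖ ∧ ‖wm x‖ = ‖w x‖) ∧
    (∀ x y, ⟪wp x, wm y⟫_ℂ = ⟪σp x, σm y⟫_ℂ) :=
  state_conversion_to_state_reflection_general m σ τ O hOu hOu' w hfeas σp σm hσp hσm wp wm hwp hwm

end
end

section
/- Let D be a finite set, f : D → {0,1}, H a finite-dimensional complex inner product space, K ⊆ H a subspace, w₀ ∈ H, and for each x ∈ D a subspace H(x) ⊆ H. Suppose for each x ∈ D a vector w_x ∈ H is given such that: if f(x) = 1 then w_x ∈ H(x) and w_x − w₀ ∈ K; and if f(x) = 0 then w_x ∈ H(x)^⊥, w_x ⊥ K, and ⟨w₀, w_x⟩ = 1. Define O_x := 2Π_{H(x)} − I (where Π_{H(x)} is the orthogonal projection onto H(x)), and set w_x⁺ := w_x, w_x⁻ := 0 if f(x) = 1, and w_x⁺ := 0, w_x⁻ := w_x if f(x) = 0.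 Then for all x, y ∈ D: O_x is unitary with O_x² = I, O_x w_x^± = ± w_x^±, and ⟨w_x⁺, w_y⁻⟩ = 1 if f(x) = 1 and f(y) = 0, and ⟨w_x⁺, w_y⁻⟩ = 0 otherwise. -/
open scoped InnerProductSpace

theorem Submodule.inner_left_eq_of_sub_mem_of_mem_orthogonal {𝕜 E : Type*} [RCLike 𝕜]
    [NormedAddCommGroup E] [InnerProductSpace 𝕜 E] {K : Submodule 𝕜 E} {u u' v : E}
    (hu : u - u' ∈ K) (hv : v ∈ Kᗮ) : ⟪u, v⟫_𝕜 = ⟪u', v⟫_𝕜 := by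
  rw [← sub_eq_zero, ← inner_sub_left]
  exact Submodule.inner_right_of_mem_orthogonal hu hv

theorem hyperedge_from_span_program_general
    {D : Type*}
    {H : Type*} [NormedAddCommGroup H] [InnerProductSpace ℂ H] [FiniteDimensional ℂ H]
    (f : D → Bool) (K : Submodule ℂ H) (w₀ : H) (Hsp : D → Submodule ℂ H)
    (w : D → H)
    (hpos : ∀ x, f x = true → w x ∈ Hsp x ∧ w x - w₀ ∈ K)
    (hneg : ∀ x, f x = false → w x ∈ (Hsp x)ᗮ ∧ w x ∈ Kᗮ ∧ ⟪w₀, w x⟫_ℂ = 1)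
    (wp wm : D → H)
    (hwp : ∀ x, wp x = if f x = true then w x else 0)
    (hwm : ∀ x, wm x = if f x = true then 0 else w x) :
    (∀ x (u v : H), ⟪Submodule.reflection (Hsp x) u, Submodule.reflection (Hsp x) v⟫_ℂ = ⟪u, v⟫_ℂ) ∧
    (∀ x (v : H), Submodule.reflection (Hsp x) (Submodule.reflection (Hsp x) v) = v) ∧
    (∀ x, Submodule.reflection (Hsp x) (wp x) = wp x) ∧
    (∀ x, Submodule.reflection (Hsp x) (wm x) = -wm x) ∧
    (∀ x y, ⟪wp x, wm y⟫_ℂ = if f x = true ∧ f y = false then 1 else 0) := by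
  refine ⟨fun x => (Submodule.reflection (Hsp x)).inner_map_map,
    fun x => Submodule.reflection_reflection (Hsp x), fun x => ?_, fun x => ?_, fun x y => ?_⟩
  · cases hx : f x
    · simp [hwp x, hx]
    · simpa [hwp x, hx] using Submodule.reflection_mem_subspace_eq_self (hpos x hx).1
  · cases hx : f x
    · simpa [hwm x, hx] using
        Submodule.reflection_mem_subspace_orthogonalComplement_eq_neg (hneg x hx).1
    · simp [hwm x, hx]
  · cases hx : f x
    · simp [hwp x, hx]
    cases hy : f y
    · obtain ⟨-, hyK, hy₀⟩ := hneg y hy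
      simpa [hwp x, hwm y, hx, hy, hy₀] using
        Submodule.inner_left_eq_of_sub_mem_of_mem_orthogonal (hpos x hx).2 hyK
    · simp [hwm y, hy]

/-- hyperedge problem from a span program.  Let `(H, x ↦ H(x), K, w₀)` be
a span program computing `f : D → {0,1}` (here `f : D → Bool`, with `true` standing for `1`),
with positive witnesses `w_x` (for `f x = 1`) and negative witnesses `w_x` (for `f x = 0`).
With `O_x := 2Π_{H(x)} - I` the reflection through `H(x)`, and `w_x⁺ := w_x, w_x⁻ := 0` for
positive inputs, `w_x⁺ := 0, w_x⁻ := w_x` for negative ones, the family `{w_x^±}` is a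
feasible solution to the corresponding hyperedge problem: `O_x` is unitary with `O_x² = I`,
`O_x w_x^± = ± w_x^±`, and `⟪w_x⁺, w_y⁻⟫ = 1` if `f x = 1 ∧ f y = 0` and `= 0` otherwise. -/
theorem hyperedge_from_span_program
    {D : Type*} [Fintype D]
    {H : Type*} [NormedAddCommGroup H] [InnerProductSpace ℂ H] [FiniteDimensional ℂ H]
    (f : D → Bool) (K : Submodule ℂ H) (w₀ : H) (Hsp : D → Submodule ℂ H)
    (w : D → H)
    (hpos : ∀ x, f x = true → w x ∈ Hsp x ∧ w x - w₀ ∈ K)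
    (hneg : ∀ x, f x = false → w x ∈ (Hsp x)ᗮ ∧ w x ∈ Kᗮ ∧ ⟪w₀, w x⟫_ℂ = 1)
    (wp wm : D → H)
    (hwp : ∀ x, wp x = if f x = true then w x else 0)
    (hwm : ∀ x, wm x = if f x = true then 0 else w x) :
    (∀ x (u v : H), ⟪Submodule.reflection (Hsp x) u, Submodule.reflection (Hsp x) v⟫_ℂ = ⟪u, v⟫_ℂ) ∧
    (∀ x (v : H), Submodule.reflection (Hsp x) (Submodule.reflection (Hsp x) v) = v) ∧
    (∀ x, Submodule.reflection (Hsp x) (wp x) = wp x) ∧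
    (∀ x, Submodule.reflection (Hsp x) (wm x) = -wm x) ∧
    (∀ x y, ⟪wp x, wm y⟫_ℂ = if f x = true ∧ f y = false then 1 else 0) :=
  hyperedge_from_span_program_general f K w₀ Hsp w hpos hneg wp wm hwp hwm
end

section
/- Let D be a finite set, f : D → {0,1} with f⁻¹(1) nonempty, H a finite-dimensional complex inner product space, and for each x ∈ D a unitary O_x on H with O_x² = I; let H(x) denote the +1-eigenspace of O_x. Suppose that for each x with f(x) = 1 a vector w_x⁺ ∈ H(x) is given, for each y with f(y) = 0 a vector w_y⁻ ∈ H(y)^⊥ is given, and ⟨w_x⁺, w_y⁻⟩ = 1 whenever f(x) = 1 and f(y) = 0. Then there exist a subspace K ⊆ H and a vector w₀ ∈ K^⊥ such that: for every x with f(x) = 1, w_x⁺ − w₀ ∈ K (hence w₀ ∈ K + H(x)); and for every y with f(y) = 0, w_y⁻ ⊥ K and ⟨w₀, w_y⁻⟩ = 1 (hence w₀ ∉ K + H(y)). -/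
open scoped InnerProductSpace

/-!
The subspace `K` is spanned by the differences `w_x⁺ - w_{x₀}⁺` of the positive witnesses, and
`w₀` is the component of `w_{x₀}⁺` orthogonal to `K`. Every `w_x⁺ - w₀` then lies in `K`. Since
`⟪w_x⁺, w_y⁻⟫ = 1` does not depend on `x`, each negative witness `w_y⁻` is orthogonal to `K`, so
`⟪w₀, w_y⁻⟫ = ⟪w_{x₀}⁺, w_y⁻⟫ = 1`; as `w_y⁻` is also orthogonal to `H(y)`, this pairing rules
out `w₀ ∈ K + H(y)`.
-/

namespace Submodule

variable {𝕜 E ι : Type*} [RCLike 𝕜] [NormedAddCommGroup E] [InnerProductSpace 𝕜 E]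

variable (𝕜) in
def differenceSpan (v : ι → E) (i₀ : ι) : Submodule 𝕜 E :=
  span 𝕜 (Set.range fun i ↦ v i - v i₀)

theorem sub_mem_differenceSpan (v : ι → E) (i₀ i : ι) : v i - v i₀ ∈ differenceSpan 𝕜 v i₀ :=
  subset_span ⟨i, rfl⟩

theorem mem_orthogonal_differenceSpan {v : ι → E} {i₀ : ι} {w : E}
    (h : ∀ i, ⟪v i, w⟫_𝕜 = ⟪v i₀, w⟫_𝕜) : w ∈ (differenceSpan 𝕜 v i₀)ᗮ := by
  have hle : differenceSpan 𝕜 v i₀ ≤ (𝕜 ∙ w)ᗮ := by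
    rw [differenceSpan, span_le]
    rintro _ ⟨i, rfl⟩
    rw [SetLike.mem_coe, mem_orthogonal_singleton_iff_inner_left, inner_sub_left, h, sub_self]
  exact (mem_orthogonal _ _).2 fun u hu ↦
    mem_orthogonal_singleton_iff_inner_left.1 (hle hu)

theorem notMem_sup_of_inner_ne_zero {K V : Submodule 𝕜 E} {u w : E} (hwK : w ∈ Kᗮ)
    (hwV : w ∈ Vᗮ) (huw : ⟪u, w⟫_𝕜 ≠ 0) : u ∉ K ⊔ V := fun hu ↦
  huw <| inner_right_of_mem_orthogonal hu <| inf_orthogonal K V ▸ ⟨hwK, hwV⟩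

end Submodule

open Submodule

theorem span_program_from_hyperedge_general
    {D : Type*} [Fintype D]
    {H : Type*} [NormedAddCommGroup H] [InnerProductSpace ℂ H]
    (f : D → Bool) (hf : ∃ x, f x = true)
    (O : D → (H →ₗ[ℂ] H))
    (wp wm : D → H)
    (hwp : ∀ x, f x = true → wp x ∈ Module.End.eigenspace (O x) 1)
    (hwm : ∀ y, f y = false → wm y ∈ (Module.End.eigenspace (O y) 1)ᗮ)
    (hcross : ∀ x y, f x = true → f y = false → ⟪wp x, wm y⟫_ℂ = 1) :
    ∃ (K : Submodule ℂ H) (w₀ : H), w₀ ∈ Kᗮ ∧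
      (∀ x, f x = true →
        wp x - w₀ ∈ K ∧ w₀ ∈ K ⊔ Module.End.eigenspace (O x) 1) ∧
      (∀ y, f y = false →
        wm y ∈ Kᗮ ∧ ⟪w₀, wm y⟫_ℂ = 1 ∧ w₀ ∉ K ⊔ Module.End.eigenspace (O y) 1) := by
  obtain ⟨x₀, hx₀⟩ := hf
  let v : {x // f x = true} → H := fun x ↦ wp x
  let K := differenceSpan ℂ v ⟨x₀, hx₀⟩
  have : FiniteDimensional ℂ K := FiniteDimensional.span_of_finite ℂ (Set.finite_range _)
  obtain ⟨p, hpK, w₀, hw₀, hsplit⟩ := K.exists_add_mem_mem_orthogonal (wp x₀)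
  have hpos : ∀ x, f x = true → wp x - w₀ ∈ K := fun x hx ↦ by
    have : wp x - w₀ = (wp x - wp x₀) + p := by rw [hsplit]; abel
    exact this ▸ K.add_mem (sub_mem_differenceSpan v _ ⟨x, hx⟩) hpK
  have hneg : ∀ y, f y = false → wm y ∈ Kᗮ := fun y hy ↦
    mem_orthogonal_differenceSpan fun x ↦ by rw [hcross x y x.2 hy, hcross x₀ y hx₀ hy]
  have hpair : ∀ y, f y = false → ⟪w₀, wm y⟫_ℂ = 1 := fun y hy ↦ by
    have : w₀ = wp x₀ - p := by rw [hsplit]; abel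
    rw [this, inner_sub_left, hcross x₀ y hx₀ hy, inner_right_of_mem_orthogonal hpK (hneg y hy),
      sub_zero]
  refine ⟨K, w₀, hw₀, fun x hx ↦ ⟨hpos x hx, ?_⟩, fun y hy ↦ ⟨hneg y hy, hpair y hy, ?_⟩⟩
  · simpa using sub_mem_sup (hpos x hx) (hwp x hx)
  · exact notMem_sup_of_inner_ne_zero (hneg y hy) (hwm y hy) (by simp [hpair y hy])

/-- span program from a hyperedge problem.  Given involutive unitaries
`O_x` with `+1`-eigenspaces `H(x)`, vectors `w_x⁺ ∈ H(x)` for `f x = 1`, vectors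
`w_y⁻ ∈ H(y)ᗮ` for `f y = 0` (here `f : D → Bool`, `true` standing for `1`), with
`⟪w_x⁺, w_y⁻⟫ = 1` whenever `f x = 1` and `f y = 0`, there exist a subspace `K ⊆ H` and a
vector `w₀ ∈ Kᗮ` forming a span program `(H, x ↦ H(x), K, w₀)` computing `f`, whose positive
and negative witnesses are the given `w_x⁺` and `w_y⁻`. -/
theorem span_program_from_hyperedge
    {D : Type*} [Fintype D]
    {H : Type*} [NormedAddCommGroup H] [InnerProductSpace ℂ H] [FiniteDimensional ℂ H]
    (f : D → Bool) (hf : ∃ x, f x = true)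
    (O : D → (H →ₗ[ℂ] H))
    (hOunitary : ∀ x (u v : H), ⟪O x u, O x v⟫_ℂ = ⟪u, v⟫_ℂ)
    (hOinv : ∀ x (v : H), O x (O x v) = v)
    (wp wm : D → H)
    (hwp : ∀ x, f x = true → wp x ∈ Module.End.eigenspace (O x) 1)
    (hwm : ∀ y, f y = false → wm y ∈ (Module.End.eigenspace (O y) 1)ᗮ)
    (hcross : ∀ x y, f x = true → f y = false → ⟪wp x, wm y⟫_ℂ = 1) :
    ∃ (K : Submodule ℂ H) (w₀ : H), w₀ ∈ Kᗮ ∧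
      (∀ x, f x = true →
        wp x - w₀ ∈ K ∧ w₀ ∈ K ⊔ Module.End.eigenspace (O x) 1) ∧
      (∀ y, f y = false →
        wm y ∈ Kᗮ ∧ ⟪w₀, wm y⟫_ℂ = 1 ∧ w₀ ∉ K ⊔ Module.End.eigenspace (O y) 1) :=
  span_program_from_hyperedge_general f hf O wp wm hwp hwm hcross
end

section
/- Let T ∈ ℕ, let H be a finite-dimensional complex inner product space, and let D be a finite set. For each t ∈ {0, …, T−1} let Π_t be an orthogonal projection on H; let U_1, …, U_T be unitaries on H; and for each x ∈ D let O_x be a unitary on H that commutes with every Π_t. For each x ∈ D let ψ_{x,0} ∈ H and recursively define ψ_{x,t+1} := U_{t+1}(O_x Π_t + (I − Π_t)) ψ_{x,t} for 0 ≤ t ≤ T−1. Let α_0, …, α_{T−1} > 0 and define w_x^± := ⊕_{t=0}^{T−1} (α_t^{±1}/2)^{1/2} · (Π_t ψ_{x,t} ⊕ (± O_x Π_t ψ_{x,t})) ∈ ⊕_{t=0}^{T−1}(H ⊕ H). Then for all x, y ∈ D: 2⟨w_x⁺, w_y⁻⟩ = ⟨ψ_{x,0}, ψ_{y,0}⟩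 − ⟨ψ_{x,T}, ψ_{y,T}⟩, and ‖w_x^±‖² = Σ_{t=0}^{T−1} α_t^{±1} ‖Π_t ψ_{x,t}‖². -/
open scoped InnerProductSpace

/-- feasible state-reflection solution from a quantum algorithm.
Given a quantum algorithm consisting of unitaries `U_1, …, U_T` interleaved with controlled
queries to an input oracle `O_x` (the control being the orthogonal projection `Π_t`, which
commutes with `O_x`), with intermediate states
`ψ_{x,t+1} = U_{t+1}(O_x Π_t + (I - Π_t)) ψ_{x,t}`, and positive weights `α_t`, the vectors
`w_x^± := ⊕_t √(α_t^{±1}/2) (Π_t ψ_{x,t} ⊕ ± O_x Π_t ψ_{x,t})` satisfy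
`2⟪w_x⁺, w_y⁻⟫ = ⟪ψ_{x,0}, ψ_{y,0}⟫ - ⟪ψ_{x,T}, ψ_{y,T}⟫` and
`‖w_x^±‖² = Σ_t α_t^{±1} ‖Π_t ψ_{x,t}‖²`. -/
theorem las_vegas_state_reflection_solution
    {D : Type*} [Fintype D]
    {H : Type*} [NormedAddCommGroup H] [InnerProductSpace ℂ H] [FiniteDimensional ℂ H]
    (T : ℕ)
    (Proj : Fin T → (H →ₗ[ℂ] H))
    (hProjIdem : ∀ t, Proj t ∘ₗ Proj t = Proj t)
    (hProjSelfAdj : ∀ t, LinearMap.adjoint (Proj t) = Proj t)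
    (Uop : Fin T → (H →ₗ[ℂ] H))
    (hUunitary : ∀ t (u v : H), ⟪Uop t u, Uop t v⟫_ℂ = ⟪u, v⟫_ℂ)
    (hUsurj : ∀ t, Function.Surjective (Uop t))
    (O : D → (H →ₗ[ℂ] H))
    (hOunitary : ∀ x (u v : H), ⟪O x u, O x v⟫_ℂ = ⟪u, v⟫_ℂ)
    (hOsurj : ∀ x, Function.Surjective (O x))
    (hcomm : ∀ x t, O x ∘ₗ Proj t = Proj t ∘ₗ O x)
    (ψ : D → ℕ → H)
    (hψ : ∀ x (t : ℕ) (h : t < T),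
      ψ x (t + 1) =
        Uop ⟨t, h⟩ (O x (Proj ⟨t, h⟩ (ψ x t)) + (ψ x t - Proj ⟨t, h⟩ (ψ x t))))
    (α : Fin T → ℝ) (hα : ∀ t, 0 < α t)
    (wp wm : D → PiLp 2 (fun _ : Fin T => WithLp 2 (H × H)))
    (hwp : ∀ x, wp x = (WithLp.equiv 2 (∀ _ : Fin T, WithLp 2 (H × H))).symm fun t =>
      ((Real.sqrt (α t / 2) : ℝ) : ℂ) •
        (WithLp.equiv 2 (H × H)).symm
          (Proj t (ψ x t), O x (Proj t (ψ x t))))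
    (hwm : ∀ x, wm x = (WithLp.equiv 2 (∀ _ : Fin T, WithLp 2 (H × H))).symm fun t =>
      ((Real.sqrt ((α t)⁻¹ / 2) : ℝ) : ℂ) •
        (WithLp.equiv 2 (H × H)).symm
          (Proj t (ψ x t), -O x (Proj t (ψ x t)))) :
    (∀ x y, 2 * ⟪wp x, wm y⟫_ℂ = ⟪ψ x 0, ψ y 0⟫_ℂ - ⟪ψ x T, ψ y T⟫_ℂ) ∧
    (∀ x, ‖wp x‖ ^ 2 = ∑ t, α t * ‖Proj t (ψ x t)‖ ^ 2 ∧
      ‖wm x‖ ^ 2 = ∑ t, (α t)⁻¹ * ‖Proj t (ψ x t)‖ ^ 2) := by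
  have hPP : ∀ (t : Fin T) (v : H), Proj t (Proj t v) = Proj t v := fun t v => by
    have := LinearMap.ext_iff.mp (hProjIdem t) v
    simpa using this
  have hP : ∀ (t : Fin T) (u v : H), ⟪Proj t u, v⟫_ℂ = ⟪u, Proj t v⟫_ℂ := by
    intro t u v
    conv_lhs => rw [← hProjSelfAdj t]
    exact LinearMap.adjoint_inner_left _ _ _
  have hOnorm : ∀ x (v : H), ‖O x v‖ = ‖v‖ := by
    intro x v
    rw [@norm_eq_sqrt_re_inner ℂ, @norm_eq_sqrt_re_inner ℂ, hOunitary]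
  -- step identity
  have step : ∀ x y (t : ℕ) (h : t < T),
      ⟪ψ x t, ψ y t⟫_ℂ - ⟪ψ x (t+1), ψ y (t+1)⟫_ℂ =
      ⟪Proj ⟨t,h⟩ (ψ x t), Proj ⟨t,h⟩ (ψ y t)⟫_ℂ
        - ⟪O x (Proj ⟨t,h⟩ (ψ x t)), O y (Proj ⟨t,h⟩ (ψ y t))⟫_ℂ := by
    intro x y t h
    set P := Proj ⟨t, h⟩ with hPdef
    have hOP : ∀ z (u : H), O z (P u) = P (O z u) := fun z u => by
      have := LinearMap.ext_iff.mp (hcomm z ⟨t, h⟩) u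
      simpa using this
    have h1 : ∀ (u v : H), ⟪O x (P u), v - P v⟫_ℂ = 0 := by
      intro u v
      rw [hOP, hP, map_sub, hPP, sub_self, inner_zero_right]
    have h2 : ∀ (u v : H), ⟪u - P u, O y (P v)⟫_ℂ = 0 := by
      intro u v
      rw [hOP, ← hP, map_sub, hPP, sub_self, inner_zero_left]
    have h3 : ∀ (u v : H), ⟪P u, v - P v⟫_ℂ = 0 := by
      intro u v
      rw [hP, map_sub, hPP, sub_self, inner_zero_right]
    have h4 : ∀ (u v : H), ⟪u - P u, P v⟫_ℂ = 0 := by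
      intro u v
      rw [← hP, map_sub, hPP, sub_self, inner_zero_left]
    have decomp : ∀ (u v : H), ⟪u, v⟫_ℂ = ⟪P u, P v⟫_ℂ + ⟪u - P u, v - P v⟫_ℂ := by
      intro u v
      have hu : u = P u + (u - P u) := by abel
      have hv : v = P v + (v - P v) := by abel
      conv_lhs => rw [hu, hv]
      rw [inner_add_left, inner_add_right, inner_add_right, h3, h4, add_zero, zero_add]
    have decomp2 :
        ⟪ψ x (t+1), ψ y (t+1)⟫_ℂ =
          ⟪O x (P (ψ x t)), O y (P (ψ y t))⟫_ℂ + ⟪ψ x t - P (ψ x t), ψ y t - P (ψ y t)⟫_ℂ := by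
      rw [hψ x t h, hψ y t h, hUunitary, ← hPdef,
        inner_add_left, inner_add_right, inner_add_right, h1, h2, add_zero, zero_add]
    rw [decomp (ψ x t) (ψ y t), decomp2]
    ring
  -- coefficient facts
  have hc1 : ∀ t : Fin T, Real.sqrt (α t / 2) * Real.sqrt ((α t)⁻¹ / 2) = 1 / 2 := by
    intro t
    rw [← Real.sqrt_mul (div_nonneg (hα t).le (by norm_num))]
    have h14 : α t / 2 * ((α t)⁻¹ / 2) = 1 / 4 := by
      rw [div_mul_div_comm, mul_inv_cancel₀ (hα t).ne']
      norm_num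
    rw [h14]
    rw [show (1 : ℝ) / 4 = (1 / 2) ^ 2 by norm_num, Real.sqrt_sq (by norm_num)]
  have hc2 : ∀ t : Fin T, Real.sqrt (α t / 2) ^ 2 = α t / 2 := fun t =>
    Real.sq_sqrt (div_nonneg (hα t).le (by norm_num))
  have hc3 : ∀ t : Fin T, Real.sqrt ((α t)⁻¹ / 2) ^ 2 = (α t)⁻¹ / 2 := fun t =>
    Real.sq_sqrt (div_nonneg (inv_nonneg.mpr (hα t).le) (by norm_num))
  constructor
  · intro x y
    have hinner : ⟪wp x, wm y⟫_ℂ = ∑ t : Fin T, (1 / 2 : ℂ) *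
        (⟪Proj t (ψ x t), Proj t (ψ y t)⟫_ℂ -
          ⟪O x (Proj t (ψ x t)), O y (Proj t (ψ y t))⟫_ℂ) := by
      rw [hwp, hwm, PiLp.inner_apply]
      refine Finset.sum_congr rfl fun t _ => ?_
      simp only [WithLp.equiv_symm_apply, WithLp.ofLp_toLp, inner_smul_left, inner_smul_right,
        WithLp.prod_inner_apply, WithLp.ofLp_fst, WithLp.smul_fst, WithLp.toLp_fst,
        WithLp.ofLp_snd, WithLp.smul_snd, WithLp.toLp_snd,
        Complex.conj_ofReal, inner_neg_right]
      rw [← mul_assoc, ← Complex.ofReal_mul,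
        mul_comm (Real.sqrt ((α t)⁻¹ / 2)) (Real.sqrt (α t / 2)), hc1 t]
      push_cast
      ring
    rw [hinner, Finset.mul_sum]
    have : ∀ t : Fin T, t ∈ Finset.univ → (2 : ℂ) * ((1 / 2 : ℂ) *
        (⟪Proj t (ψ x t), Proj t (ψ y t)⟫_ℂ -
          ⟪O x (Proj t (ψ x t)), O y (Proj t (ψ y t))⟫_ℂ)) =
        (fun n => ⟪ψ x n, ψ y n⟫_ℂ) t - (fun n => ⟪ψ x n, ψ y n⟫_ℂ) (t + 1) := by
      intro t _
      rw [← step x y t t.isLt]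
      simp only []
      ring
    rw [Finset.sum_congr rfl this, Fin.sum_univ_eq_sum_range
      (fun n => (fun n => ⟪ψ x n, ψ y n⟫_ℂ) n - (fun n => ⟪ψ x n, ψ y n⟫_ℂ) (n + 1)) T,
      Finset.sum_range_sub' (fun n => ⟪ψ x n, ψ y n⟫_ℂ) T]
  · intro x
    constructor
    · rw [hwp, PiLp.norm_sq_eq_of_L2]
      refine Finset.sum_congr rfl fun t _ => ?_
      simp only [WithLp.equiv_symm_apply, WithLp.ofLp_toLp, norm_smul, mul_pow,
        WithLp.prod_norm_sq_eq_of_L2, WithLp.ofLp_fst, WithLp.smul_fst, WithLp.toLp_fst,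
        WithLp.ofLp_snd, WithLp.smul_snd, WithLp.toLp_snd,
        Complex.norm_real, Real.norm_eq_abs, sq_abs, hc2 t, hOnorm, norm_neg]
      ring
    · rw [hwm, PiLp.norm_sq_eq_of_L2]
      refine Finset.sum_congr rfl fun t _ => ?_
      simp only [WithLp.equiv_symm_apply, WithLp.ofLp_toLp, norm_smul, mul_pow,
        WithLp.prod_norm_sq_eq_of_L2, WithLp.ofLp_fst, WithLp.smul_fst, WithLp.toLp_fst,
        WithLp.ofLp_snd, WithLp.smul_snd, WithLp.toLp_snd,
        Complex.norm_real, Real.norm_eq_abs, sq_abs, hc3 t, hOnorm, norm_neg]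
      ring
end

section
/- Let δ ∈ (0,1] and suppose every eigenvalue λ of the real symmetric matrix D^{1/2} P D^{-1/2} with λ ≠ 1 satisfies λ ≤ 1 − δ (P has spectral gap at least δ). Let M ⊆ V be nonempty, let ε := Σ_{v∈M} π_v, and define ξ ∈ ℝ^V by ξ_v := π_v for v ∉ M and ξ_v := π_v (1 − 1/ε) for v ∈ M. Then ξᵀ (D(I − P))⁺ ξ ≤ (1/ε − 1)/δ ≤ 1/(δ ε). -/
/-!
Since `L = D (1 - P)` is symmetric, `ξᵀ L⁺ ξ = 2 ξᵀx - xᵀ L x` at `x = L⁺ ξ`, so it suffices to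
bound `2 ξᵀx - xᵀ L x` for every `x`. With `y = D^{1/2} x` one has `xᵀ L x = yᵀ (1 - S) y` for the
symmetric matrix `S = D^{1/2} P D^{-1/2}`, whose eigenvalue `1` is simple with eigenvector `√π`
(irreducibility, through the maximum principle). The spectral gap then gives the Poincaré
inequality `yᵀ (1 - S) y ≥ δ ‖y - ⟨√π, y⟩ √π‖²`, and since `ξ` has total mass zero, completing the
square bounds `2 ξᵀx - xᵀ L x` by `(Σ_v ξ_v² / π_v) / δ = (1/ε - 1) / δ`.
-/

open Matrix

/-- `B` is the Moore–Penrose pseudoinverse of `A`. -/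
def IsMoorePenrose {n : Type*} [Fintype n] (A B : Matrix n n ℝ) : Prop :=
  A * B * A = A ∧ B * A * B = B ∧ (A * B)ᵀ = A * B ∧ (B * A)ᵀ = B * A

namespace IsMoorePenrose

variable {n : Type*} [Fintype n] {A B C : Matrix n n ℝ}

theorem unique (hB : IsMoorePenrose A B) (hC : IsMoorePenrose A C) : B = C := by
  obtain ⟨hB₁, hB₂, hB₃, hB₄⟩ := hB
  obtain ⟨hC₁, hC₂, hC₃, hC₄⟩ := hC
  have hAB : A * B = A * C :=
    calc A * B = (A * C * A) * B := by rw [hC₁]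
      _ = (A * C)ᵀ * (A * B)ᵀ := by rw [hC₃, hB₃, Matrix.mul_assoc]
      _ = (A * B * A * C)ᵀ := by rw [← transpose_mul, ← Matrix.mul_assoc]
      _ = A * C := by rw [hB₁, hC₃]
  have hBA : B * A = C * A :=
    calc B * A = B * (A * C * A) := by rw [hC₁]
      _ = (B * A)ᵀ * (C * A)ᵀ := by rw [hB₄, hC₄]; simp only [Matrix.mul_assoc]
      _ = (C * (A * B * A))ᵀ := by rw [← transpose_mul, Matrix.mul_assoc, Matrix.mul_assoc]
      _ = C * A := by rw [hB₁, hC₄]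
  calc B = B * A * B := hB₂.symm
    _ = C * A * C := by rw [hBA, Matrix.mul_assoc, hAB, ← Matrix.mul_assoc]
    _ = C := hC₂

theorem transpose (h : IsMoorePenrose A B) : IsMoorePenrose Aᵀ Bᵀ := by
  obtain ⟨h₁, h₂, h₃, h₄⟩ := h
  refine ⟨?_, ?_, ?_, ?_⟩
  · rw [← transpose_mul, ← transpose_mul, ← Matrix.mul_assoc, h₁]
  · rw [← transpose_mul, ← transpose_mul, ← Matrix.mul_assoc, h₂]
  · rw [← transpose_mul, transpose_transpose, h₄]
  · rw [← transpose_mul, transpose_transpose, h₃]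

theorem transpose_eq_self (hA : Aᵀ = A) (h : IsMoorePenrose A B) : Bᵀ = B :=
  ((hA ▸ h.transpose).unique h)

/-- At `x = B ξ` one has `2 ξᵀx - xᵀ A x = ξᵀ B ξ`. -/
theorem dotProduct_mulVec_le (hA : Aᵀ = A) (h : IsMoorePenrose A B) {ξ : n → ℝ} {c : ℝ}
    (hc : ∀ x, 2 * (ξ ⬝ᵥ x) - x ⬝ᵥ (A *ᵥ x) ≤ c) : ξ ⬝ᵥ (B *ᵥ ξ) ≤ c := by
  have hquad : (B *ᵥ ξ) ⬝ᵥ (A *ᵥ (B *ᵥ ξ)) = ξ ⬝ᵥ (B *ᵥ ξ) :=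
    calc (B *ᵥ ξ) ⬝ᵥ (A *ᵥ (B *ᵥ ξ)) = (ξ ᵥ* Bᵀ) ⬝ᵥ ((A * B) *ᵥ ξ) := by
          rw [vecMul_transpose, mulVec_mulVec]
      _ = ξ ⬝ᵥ ((B * A * B) *ᵥ ξ) := by
          rw [h.transpose_eq_self hA, ← dotProduct_mulVec, mulVec_mulVec, Matrix.mul_assoc]
      _ = ξ ⬝ᵥ (B *ᵥ ξ) := by rw [h.2.1]
  have := hc (B *ᵥ ξ)
  rw [hquad] at this
  linarith

end IsMoorePenrose

theorem two_mul_dotProduct_sub_le_div {n : Type*} [Fintype n] {p ζ y : n → ℝ} {δ q : ℝ}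
    (hδ : 0 < δ) (hp : p ⬝ᵥ p = 1) (hζ : p ⬝ᵥ ζ = 0) (hq : δ * (y ⬝ᵥ y - (p ⬝ᵥ y) ^ 2) ≤ q) :
    2 * (ζ ⬝ᵥ y) - q ≤ (ζ ⬝ᵥ ζ) / δ := by
  set y' := y - (p ⬝ᵥ y) • p
  have hζy : ζ ⬝ᵥ y' = ζ ⬝ᵥ y := by
    simp [y', dotProduct_sub, dotProduct_smul, dotProduct_comm ζ p, hζ]
  have hy'y' : y' ⬝ᵥ y' = y ⬝ᵥ y - (p ⬝ᵥ y) ^ 2 := by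
    simp only [y', sub_dotProduct, dotProduct_sub, smul_dotProduct, dotProduct_smul, hp,
      dotProduct_comm y p, smul_eq_mul]
    ring
  have hsq : 0 ≤ (ζ - δ • y') ⬝ᵥ (ζ - δ • y') := dotProduct_self_star_nonneg _
  simp only [sub_dotProduct, dotProduct_sub, smul_dotProduct, dotProduct_smul, smul_eq_mul,
    dotProduct_comm y' ζ, hζy, hy'y'] at hsq
  rw [le_div_iff₀ hδ]
  nlinarith

section Spectral

variable {n : Type*} [Fintype n] [DecidableEq n]

theorem Matrix.posSemidef_of_eigenvalues_nonneg {A : Matrix n n ℝ} (hA : Aᵀ = A)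
    (h : ∀ (μ : ℝ) (u : n → ℝ), u ≠ 0 → A *ᵥ u = μ • u → 0 ≤ μ) : A.PosSemidef := by
  have hAh : A.IsHermitian := by rw [IsHermitian, conjTranspose_eq_transpose_of_trivial, hA]
  refine hAh.posSemidef_iff_eigenvalues_nonneg.2 fun i => h _ _ ?_ (hAh.mulVec_eigenvectorBasis i)
  intro h0
  exact hAh.eigenvectorBasis.orthonormal.ne_zero i (by ext v; exact congrFun h0 v)

/-- The hypotheses make `1 - S - δ (1 - p pᵀ)` positive semidefinite. -/
theorem Matrix.mul_sub_sq_le_dotProduct_one_sub_mulVec {S : Matrix n n ℝ} {p : n → ℝ} {δ : ℝ}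
    (hS : Sᵀ = S) (hSp : S *ᵥ p = p) (hp : p ⬝ᵥ p = 1)
    (hfix : ∀ u, S *ᵥ u = u → p ⬝ᵥ u = 0 → u = 0)
    (hgap : ∀ (lam : ℝ) (y : n → ℝ), y ≠ 0 → S *ᵥ y = lam • y → lam ≠ 1 → lam ≤ 1 - δ)
    (y : n → ℝ) : δ * (y ⬝ᵥ y - (p ⬝ᵥ y) ^ 2) ≤ y ⬝ᵥ ((1 - S) *ᵥ y) := by
  set T : Matrix n n ℝ := 1 - S - δ • (1 - vecMulVec p p)
  have hproj : ∀ u, vecMulVec p p *ᵥ u = (p ⬝ᵥ u) • p := fun u => by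
    rw [vecMulVec_mulVec, op_smul_eq_smul]
  have hTu : ∀ u, T *ᵥ u = u - S *ᵥ u - δ • (u - (p ⬝ᵥ u) • p) := fun u => by
    simp only [T, sub_mulVec, smul_mulVec, one_mulVec, hproj]
  have hT : Tᵀ = T := by
    simp only [T, transpose_sub, transpose_smul, transpose_one, hS, transpose_vecMulVec]
  have hTp : T *ᵥ p = 0 := by simp [hTu, hSp, hp]
  have hTpsd : T.PosSemidef := by
    refine posSemidef_of_eigenvalues_nonneg hT fun μ u hu hμ => ?_
    have hμp : μ * (p ⬝ᵥ u) = 0 := by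
      rw [← smul_eq_mul, ← dotProduct_smul, ← hμ, dotProduct_mulVec, ← mulVec_transpose, hT, hTp,
        zero_dotProduct]
    rcases mul_eq_zero.1 hμp with hμ0 | hpu
    · exact hμ0.ge
    have hSu : S *ᵥ u = (1 - δ - μ) • u := by
      rw [hTu, hpu, zero_smul, sub_zero] at hμ
      rw [sub_smul, sub_smul, one_smul, ← hμ]
      abel
    by_cases h1 : 1 - δ - μ = 1
    · exact absurd (hfix u (by rwa [h1, one_smul] at hSu) hpu) hu
    · linarith [hgap _ u hu hSu h1]
  have := hTpsd.dotProduct_mulVec_nonneg y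
  rw [star_trivial, hTu] at this
  simp only [dotProduct_sub, dotProduct_smul, smul_eq_mul, dotProduct_comm y p] at this
  rw [sub_mulVec, one_mulVec, dotProduct_sub]
  linarith

end Spectral

section MarkovChain

variable {V : Type*} [Fintype V] [DecidableEq V]

/-- Maximum principle: a harmonic function attains its maximum everywhere it can reach. -/
theorem Matrix.eq_of_mulVec_eq_self {P : Matrix V V ℝ} (hP : P ∈ rowStochastic ℝ V)
    (hirr : ∀ v w, ∃ t : ℕ, 0 < (P ^ t) v w) {z : V → ℝ} (hz : P *ᵥ z = z) (v w : V) :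
    z v = z w := by
  obtain ⟨v₀, -, hmax⟩ := Finset.exists_max_image Finset.univ z ⟨v, Finset.mem_univ v⟩
  have hzt : ∀ t : ℕ, (P ^ t) *ᵥ z = z := fun t => by
    induction t with
    | zero => exact one_mulVec z
    | succ t ih => rw [pow_succ, ← mulVec_mulVec, hz, ih]
  suffices h : ∀ u, z u = z v₀ by rw [h v, h w]
  intro u
  obtain ⟨t, ht⟩ := hirr v₀ u
  have hPt : P ^ t ∈ rowStochastic ℝ V := pow_mem hP t
  have hdev : ∑ u', (P ^ t) v₀ u' * (z v₀ - z u') = 0 := by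
    simp only [mul_sub, Finset.sum_sub_distrib, ← Finset.sum_mul,
      sum_row_of_mem_rowStochastic hPt, one_mul]
    exact sub_eq_zero.2 (congrFun (hzt t) v₀).symm
  have hu := (Finset.sum_eq_zero_iff_of_nonneg fun u' _ =>
    mul_nonneg (nonneg_of_mem_rowStochastic hPt) (sub_nonneg.2 (hmax u' (Finset.mem_univ u')))).1
    hdev u (Finset.mem_univ u)
  rcases mul_eq_zero.1 hu with h | h
  · exact absurd h ht.ne'
  · linarith

noncomputable def symmetrization (π : V → ℝ) (P : Matrix V V ℝ) : Matrix V V ℝ :=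
  diagonal (fun v => √(π v)) * P * diagonal (fun v => (√(π v))⁻¹)

variable {π : V → ℝ} {P : Matrix V V ℝ}

theorem symmetrization_apply (v w : V) :
    symmetrization π P v w = √(π v) * P v w / √(π w) := by
  simp [symmetrization, mul_diagonal, diagonal_mul, div_eq_mul_inv]

theorem diagonal_sqrt_inv_mul_diagonal_sqrt (hπ : ∀ v, 0 < π v) :
    diagonal (fun v => (√(π v))⁻¹) * diagonal (fun v => √(π v)) = 1 := by
  rw [diagonal_mul_diagonal, ← diagonal_one]
  exact congrArg diagonal (funext fun v => inv_mul_cancel₀ (Real.sqrt_pos.2 (hπ v)).ne')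

theorem transpose_symmetrization (hπ : ∀ v, 0 < π v)
    (hrev : ∀ v w, π v * P v w = π w * P w v) :
    (symmetrization π P)ᵀ = symmetrization π P := by
  ext v w
  have hsq : ∀ u, √(π u) * √(π u) = π u := fun u => Real.mul_self_sqrt (hπ u).le
  rw [transpose_apply, symmetrization_apply, symmetrization_apply,
    div_eq_div_iff (Real.sqrt_pos.2 (hπ v)).ne' (Real.sqrt_pos.2 (hπ w)).ne']
  linear_combination P w v * hsq w - P v w * hsq v - hrev v w

theorem symmetrization_mulVec_sqrt (hP : P ∈ rowStochastic ℝ V) (hπ : ∀ v, 0 < π v) :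
    symmetrization π P *ᵥ (fun v => √(π v)) = fun v => √(π v) := by
  have hone : diagonal (fun v => (√(π v))⁻¹) *ᵥ (fun v => √(π v)) = 1 := by
    ext v
    simp [mulVec_diagonal, inv_mul_cancel₀ (Real.sqrt_pos.2 (hπ v)).ne']
  rw [symmetrization, ← mulVec_mulVec, hone, ← mulVec_mulVec, one_vecMul_of_mem_rowStochastic hP]
  ext v
  simp [mulVec_diagonal]

theorem eq_zero_of_symmetrization_mulVec_eq_self (hP : P ∈ rowStochastic ℝ V)
    (hirr : ∀ v w, ∃ t : ℕ, 0 < (P ^ t) v w) (hπ : ∀ v, 0 < π v) {u : V → ℝ}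
    (hu : symmetrization π P *ᵥ u = u) (hpu : (fun v => √(π v)) ⬝ᵥ u = 0) : u = 0 := by
  set z := diagonal (fun v => (√(π v))⁻¹) *ᵥ u
  have hz : P *ᵥ z = z :=
    calc P *ᵥ z = (diagonal (fun v => (√(π v))⁻¹) * symmetrization π P) *ᵥ u := by
          rw [symmetrization, ← Matrix.mul_assoc, ← Matrix.mul_assoc,
            diagonal_sqrt_inv_mul_diagonal_sqrt hπ, Matrix.one_mul, ← mulVec_mulVec]
      _ = z := by rw [← mulVec_mulVec, hu]
  have hu_eq : ∀ v, u v = √(π v) * z v := fun v => by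
    simp [z, mulVec_diagonal, mul_inv_cancel_left₀ (Real.sqrt_pos.2 (hπ v)).ne']
  ext w
  have hsum : (∑ v, π v) * z w = 0 := by
    rw [← hpu, Finset.sum_mul]
    refine Finset.sum_congr rfl fun v _ => ?_
    rw [hu_eq, eq_of_mulVec_eq_self hP hirr hz w v, ← mul_assoc, Real.mul_self_sqrt (hπ v).le]
  have hπsum_pos : 0 < ∑ v, π v := Finset.sum_pos (fun v _ => hπ v) ⟨w, Finset.mem_univ w⟩
  rw [hu_eq, (mul_eq_zero.1 hsum).resolve_left hπsum_pos.ne', mul_zero, Pi.zero_apply]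

theorem diagonal_sqrt_mul_one_sub_symmetrization_mul_diagonal_sqrt (hπ : ∀ v, 0 < π v) :
    diagonal (fun v => √(π v)) * (1 - symmetrization π P) * diagonal (fun v => √(π v)) =
      diagonal π * (1 - P) := by
  rw [symmetrization, Matrix.mul_sub, Matrix.sub_mul, Matrix.mul_one, diagonal_mul_diagonal]
  have hsq : (fun v => √(π v) * √(π v)) = π := funext fun v => Real.mul_self_sqrt (hπ v).le
  simp only [Matrix.mul_assoc]
  rw [diagonal_sqrt_inv_mul_diagonal_sqrt hπ, Matrix.mul_one, ← Matrix.mul_assoc,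
    diagonal_mul_diagonal, hsq, Matrix.mul_sub, Matrix.mul_one]

/-- Poincaré inequality for the Dirichlet form `xᵀ D (1 - P) x`, in dual form. -/
theorem two_mul_dotProduct_sub_dirichlet_le (hP : P ∈ rowStochastic ℝ V)
    (hirr : ∀ v w, ∃ t : ℕ, 0 < (P ^ t) v w) (hπ : ∀ v, 0 < π v) (hπsum : ∑ v, π v = 1)
    (hrev : ∀ v w, π v * P v w = π w * P w v) {δ : ℝ} (hδ : 0 < δ)
    (hgap : ∀ (lam : ℝ) (y : V → ℝ), y ≠ 0 → symmetrization π P *ᵥ y = lam • y →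
      lam ≠ 1 → lam ≤ 1 - δ)
    {ξ : V → ℝ} (hξ : ∑ v, ξ v = 0) (x : V → ℝ) :
    2 * (ξ ⬝ᵥ x) - x ⬝ᵥ ((diagonal π * (1 - P)) *ᵥ x) ≤ (∑ v, ξ v ^ 2 / π v) / δ := by
  set p : V → ℝ := fun v => √(π v)
  have hp0 : ∀ v, p v ≠ 0 := fun v => (Real.sqrt_pos.2 (hπ v)).ne'
  have hpp : ∀ v, p v * p v = π v := fun v => Real.mul_self_sqrt (hπ v).le
  set y := diagonal p *ᵥ x
  set ζ := diagonal (fun v => (p v)⁻¹) *ᵥ ξ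
  have hp : p ⬝ᵥ p = 1 := by simp only [dotProduct, hpp, hπsum]
  have hpζ : p ⬝ᵥ ζ = 0 := by
    simp only [ζ, dotProduct, mulVec_diagonal, mul_inv_cancel_left₀ (hp0 _), hξ]
  have hζζ : ζ ⬝ᵥ ζ = ∑ v, ξ v ^ 2 / π v := by
    refine Finset.sum_congr rfl fun v _ => ?_
    simp only [ζ, mulVec_diagonal]
    rw [← hpp]
    field_simp
  have hξx : ξ ⬝ᵥ x = ζ ⬝ᵥ y := by
    refine Finset.sum_congr rfl fun v _ => ?_
    simp only [ζ, y, mulVec_diagonal]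
    field_simp [hp0 v]
  have hxLx : x ⬝ᵥ ((diagonal π * (1 - P)) *ᵥ x) = y ⬝ᵥ ((1 - symmetrization π P) *ᵥ y) := by
    have hxD : x ᵥ* diagonal p = y := by
      ext v
      simp [y, vecMul_diagonal, mulVec_diagonal, mul_comm]
    rw [← diagonal_sqrt_mul_one_sub_symmetrization_mul_diagonal_sqrt hπ, ← mulVec_mulVec,
      ← mulVec_mulVec, dotProduct_mulVec, hxD]
  rw [hξx, hxLx, ← hζζ]
  refine two_mul_dotProduct_sub_le_div hδ hp hpζ ?_
  exact mul_sub_sq_le_dotProduct_one_sub_mulVec (transpose_symmetrization hπ hrev)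
    (symmetrization_mulVec_sqrt hP hπ) hp
    (fun u => eq_zero_of_symmetrization_mulVec_eq_self hP hirr hπ) hgap y

end MarkovChain

section NetFlow

variable {V : Type*} [Fintype V] [DecidableEq V] {π : V → ℝ} {M : Finset V}

theorem sum_ite_mem_mul (hπsum : ∑ v, π v = 1) (a : ℝ) :
    ∑ v, (if v ∈ M then π v * a else π v) = (∑ v ∈ M, π v) * a + (1 - ∑ v ∈ M, π v) := by
  have hsplit : ∀ v, (if v ∈ M then π v * a else π v) =
      π v + if v ∈ M then π v * (a - 1) else 0 := fun v => by split_ifs <;> ring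
  simp only [hsplit, Finset.sum_add_distrib, Finset.sum_ite_mem, Finset.univ_inter,
    ← Finset.sum_mul, hπsum]
  ring

variable {ε : ℝ} {ξ : V → ℝ}

theorem sum_netFlow_eq_zero (hπsum : ∑ v, π v = 1) (hε : ε = ∑ v ∈ M, π v) (hε0 : ε ≠ 0)
    (hξ : ∀ v, ξ v = if v ∈ M then π v * (1 - 1 / ε) else π v) : ∑ v, ξ v = 0 := by
  simp only [hξ, sum_ite_mem_mul hπsum, ← hε]
  field_simp
  ring

theorem sum_netFlow_sq_div (hπ : ∀ v, 0 < π v) (hπsum : ∑ v, π v = 1)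
    (hε : ε = ∑ v ∈ M, π v) (hε0 : ε ≠ 0)
    (hξ : ∀ v, ξ v = if v ∈ M then π v * (1 - 1 / ε) else π v) :
    ∑ v, ξ v ^ 2 / π v = 1 / ε - 1 := by
  have hterm : ∀ v, ξ v ^ 2 / π v = if v ∈ M then π v * (1 - 1 / ε) ^ 2 else π v := fun v => by
    rw [hξ]
    split_ifs <;> field_simp [(hπ v).ne']
  simp only [hterm, sum_ite_mem_mul hπsum, ← hε]
  field_simp
  ring

end NetFlow

theorem effective_resistance_stationary_to_marked_general
    {V : Type*} [Fintype V] [DecidableEq V]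
    (P : Matrix V V ℝ) (π : V → ℝ)
    (hPnonneg : ∀ v w, 0 ≤ P v w) (hProw : ∀ v, ∑ w, P v w = 1)
    (hirr : ∀ v w, ∃ t : ℕ, 1 ≤ t ∧ 0 < (P ^ t) v w)
    (hπpos : ∀ v, 0 < π v) (hπsum : ∑ v, π v = 1)
    (hrev : ∀ v w, π v * P v w = π w * P w v)
    (δ : ℝ) (hδ0 : 0 < δ)
    (hgap : ∀ (lam : ℝ) (y : V → ℝ), y ≠ 0 →
      (diagonal (fun v => Real.sqrt (π v)) * P *
          diagonal (fun v => (Real.sqrt (π v))⁻¹)) *ᵥ y = lam • y →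
      lam ≠ 1 → lam ≤ 1 - δ)
    (M : Finset V) (hM : M.Nonempty)
    (ε : ℝ) (hε : ε = ∑ v ∈ M, π v)
    (ξ : V → ℝ) (hξ : ∀ v, ξ v = if v ∈ M then π v * (1 - 1 / ε) else π v)
    (Lplus : Matrix V V ℝ)
    (hLplus : IsMoorePenrose (diagonal π * (1 - P)) Lplus) :
    ξ ⬝ᵥ (Lplus *ᵥ ξ) ≤ (1 / ε - 1) / δ ∧ (1 / ε - 1) / δ ≤ 1 / (δ * ε) := by
  have hP : P ∈ rowStochastic ℝ V := mem_rowStochastic_iff_sum.2 ⟨hPnonneg, hProw⟩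
  have hirr' : ∀ v w, ∃ t : ℕ, 0 < (P ^ t) v w := fun v w => (hirr v w).imp fun _ => And.right
  have hε0 : ε ≠ 0 := hε ▸ (Finset.sum_pos (fun v _ => hπpos v) hM).ne'
  have hL : (diagonal π * (1 - P))ᵀ = diagonal π * (1 - P) := by
    rw [← diagonal_sqrt_mul_one_sub_symmetrization_mul_diagonal_sqrt hπpos]
    simp only [transpose_mul, diagonal_transpose, transpose_sub, transpose_one,
      transpose_symmetrization hπpos hrev, Matrix.mul_assoc]
  refine ⟨?_, ?_⟩
  · rw [← sum_netFlow_sq_div hπpos hπsum hε hε0 hξ]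
    exact hLplus.dotProduct_mulVec_le hL (two_mul_dotProduct_sub_dirichlet_le hP hirr' hπpos
      hπsum hrev hδ0 hgap (sum_netFlow_eq_zero hπsum hε hε0 hξ))
  · rw [mul_comm, ← div_div]
    gcongr
    linarith

/-- For an irreducible, reversible Markov chain `P` with stationary
distribution `π` and spectral gap at least `δ`, a nonempty marked set `M ⊆ V` with
`ε := Σ_{v ∈ M} π_v`, and the net-flow `ξ = π - π|_M / ε` (i.e. `ξ_v = π_v` for `v ∉ M` and
`ξ_v = π_v (1 - 1/ε)` for `v ∈ M`), the effective resistance satisfies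
`ξᵀ (D(I - P))⁺ ξ ≤ (1/ε - 1)/δ ≤ 1/(δ ε)`. -/
theorem effective_resistance_stationary_to_marked
    {V : Type*} [Fintype V] [DecidableEq V] [Nonempty V]
    (P : Matrix V V ℝ) (π : V → ℝ)
    (hPnonneg : ∀ v w, 0 ≤ P v w) (hProw : ∀ v, ∑ w, P v w = 1)
    (hirr : ∀ v w, ∃ t : ℕ, 1 ≤ t ∧ 0 < (P ^ t) v w)
    (hπpos : ∀ v, 0 < π v) (hπsum : ∑ v, π v = 1)
    (hrev : ∀ v w, π v * P v w = π w * P w v)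
    (δ : ℝ) (hδ0 : 0 < δ) (hδ1 : δ ≤ 1)
    (hgap : ∀ (lam : ℝ) (y : V → ℝ), y ≠ 0 →
      (diagonal (fun v => Real.sqrt (π v)) * P *
          diagonal (fun v => (Real.sqrt (π v))⁻¹)) *ᵥ y = lam • y →
      lam ≠ 1 → lam ≤ 1 - δ)
    (M : Finset V) (hM : M.Nonempty)
    (ε : ℝ) (hε : ε = ∑ v ∈ M, π v)
    (ξ : V → ℝ) (hξ : ∀ v, ξ v = if v ∈ M then π v * (1 - 1 / ε) else π v)
    (Lplus : Matrix V V ℝ)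
    (hLplus : IsMoorePenrose (diagonal π * (1 - P)) Lplus) :
    ξ ⬝ᵥ (Lplus *ᵥ ξ) ≤ (1 / ε - 1) / δ ∧ (1 / ε - 1) / δ ≤ 1 / (δ * ε) :=
  effective_resistance_stationary_to_marked_general P π hPnonneg hProw hirr hπpos hπsum hrev δ hδ0
    hgap M hM ε hε ξ hξ Lplus hLplus
end

section
/- Let t ≥ 1 be an integer, M ⊆ V, let σ ∈ ℝ^V be a probability vector, and let ν ∈ ℝ^V be a probability vector with ν_v = 0 for all v ∉ M. Set ξ := σ − ν and assume D^{-1/2}ξ is orthogonal to the kernel of the real symmetric matrix I − D^{1/2} P^t D^{-1/2}. Then Σ_{v∈M} ν_v² / (σ_v + π_v) ≤ 2·(1 + ξᵀ (D(I − P^t))⁺ ξ). -/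
open Matrix

/-!
Write `L = D(I - P^t)`; the kernel in the hypothesis is `D^{1/2} ker L`. Since `ξ` is
orthogonal to `ker L`, it lies in the range of `L`, so `ξ = L u` with `u = L⁺ ξ` and
`ξᵀ L⁺ ξ = uᵀ L u`. Test `ξ = σ - ν` against `y = ν / (σ + π)`: then
`νᵀ y = S := Σ ν² / (σ + π)`, and `σᵀ y ≤ (1 + Σ σ y²) / 2` by `2 y ≤ 1 + y²`, while
positivity of `L` on `2u + y` and the Dirichlet-form bound `yᵀ L y ≤ 2 Σ π y²` give
`-uᵀ L y ≤ uᵀ L u + Σ π y² / 2`. Since `Σ (σ + π) y² = S`, adding up yields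
`S ≤ 1/2 + uᵀ L u + S / 2`.
-/

namespace Matrix

variable {n : Type*} [Fintype n]

theorem IsSymm.mulVec_dotProduct {A : Matrix n n ℝ} (hA : A.IsSymm) (u w : n → ℝ) :
    (A *ᵥ u) ⬝ᵥ w = u ⬝ᵥ (A *ᵥ w) := by
  rw [dotProduct_mulVec, ← vecMul_transpose, hA.eq]

theorem IsSymm.neg_dotProduct_mulVec_le {A : Matrix n n ℝ} (hA : A.IsSymm)
    (hpos : ∀ x, 0 ≤ x ⬝ᵥ (A *ᵥ x)) (u y : n → ℝ) :
    -(u ⬝ᵥ (A *ᵥ y)) ≤ u ⬝ᵥ (A *ᵥ u) + y ⬝ᵥ (A *ᵥ y) / 4 := by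
  have h := hpos ((2 : ℝ) • u + y)
  simp only [mulVec_add, mulVec_smul, dotProduct_add, add_dotProduct, dotProduct_smul,
    smul_dotProduct, smul_eq_mul, ← hA.mulVec_dotProduct y u, dotProduct_comm (A *ᵥ y)] at h
  linarith

/-- A pseudoinverse `B` with `A B A = A` and `A B` symmetric makes `A B` the orthogonal projection
onto the range of `A`, which for symmetric `A` is the orthogonal complement of `ker A`. -/
theorem IsSymm.mulVec_mulVec_eq_self {A B : Matrix n n ℝ} (hA : A.IsSymm)
    (hABA : A * B * A = A) (hAB : (A * B)ᵀ = A * B) {ξ : n → ℝ}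
    (hξ : ∀ z, A *ᵥ z = 0 → ξ ⬝ᵥ z = 0) : A *ᵥ (B *ᵥ ξ) = ξ := by
  have hAAB : A * (A * B) = A := by
    calc A * (A * B) = Aᵀ * (A * B)ᵀ := by rw [hA.eq, hAB]
      _ = A := by rw [← transpose_mul, hABA, hA.eq]
  set z := ξ - A *ᵥ (B *ᵥ ξ) with hz_def
  have hz : A *ᵥ z = 0 := by
    rw [hz_def, mulVec_sub, mulVec_mulVec, mulVec_mulVec, mul_assoc, hAAB, sub_self]
  have hzz : z ⬝ᵥ z = 0 := by
    calc z ⬝ᵥ z = ξ ⬝ᵥ z - (B *ᵥ ξ) ⬝ᵥ (A *ᵥ z) := by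
          rw [← hA.mulVec_dotProduct, ← sub_dotProduct]
      _ = 0 := by rw [hξ z hz, hz, dotProduct_zero, sub_zero]
  exact (sub_eq_zero.mp (dotProduct_self_eq_zero.mp hzz)).symm

theorem IsSymm.dotProduct_mulVec_eq {A B : Matrix n n ℝ} (hA : A.IsSymm)
    (hABA : A * B * A = A) {u ξ : n → ℝ} (hu : A *ᵥ u = ξ) :
    ξ ⬝ᵥ (B *ᵥ ξ) = u ⬝ᵥ (A *ᵥ u) := by
  rw [← hu, hA.mulVec_dotProduct, mulVec_mulVec, mulVec_mulVec, hABA]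

end Matrix

section Reversible

variable {V : Type*}

def IsReversible (Q : Matrix V V ℝ) (π : V → ℝ) : Prop :=
  ∀ v w, π v * Q v w = π w * Q w v

namespace IsReversible

variable [Fintype V] {Q : Matrix V V ℝ} {π : V → ℝ}

theorem sum_mul_apply (h : IsReversible Q π) (hrow : ∀ v, ∑ w, Q v w = 1) (w : V) :
    ∑ v, π v * Q v w = π w := by
  simp only [h _ w, ← Finset.mul_sum, hrow, mul_one]

variable [DecidableEq V]

theorem semiconjBy (h : IsReversible Q π) : SemiconjBy (diagonal π) Q Qᵀ := by
  ext v w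
  simp only [diagonal_mul, mul_diagonal, transpose_apply, h v w, mul_comm]

theorem pow (h : IsReversible Q π) (t : ℕ) : IsReversible (Q ^ t) π := by
  intro v w
  have := congrFun₂ (h.semiconjBy.pow_right t) v w
  simpa only [diagonal_mul, mul_diagonal, ← transpose_pow, transpose_apply, mul_comm] using this

theorem isSymm_diagonal_mul_one_sub (h : IsReversible Q π) :
    (diagonal π * (1 - Q)).IsSymm := by
  ext v w
  simp only [transpose_apply, diagonal_mul, Matrix.sub_apply, one_apply, mul_sub, h w v,
    eq_comm (a := w)]
  split_ifs with hvw
  · subst hvw; rfl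
  · simp only [mul_zero]

theorem diagonal_mul_one_sub_mulVec_apply (hrow : ∀ v, ∑ w, Q v w = 1) (x : V → ℝ) (v : V) :
    ((diagonal π * (1 - Q)) *ᵥ x) v = ∑ w, π v * Q v w * (x v - x w) := by
  rw [← mulVec_mulVec, mulVec_diagonal, sub_mulVec, one_mulVec, Pi.sub_apply]
  calc π v * (x v - (Q *ᵥ x) v) = π v * (∑ w, Q v w * x v - ∑ w, Q v w * x w) := by
        rw [← Finset.sum_mul, hrow, one_mul]; rfl
    _ = ∑ w, π v * Q v w * (x v - x w) := by
        rw [← Finset.sum_sub_distrib, Finset.mul_sum]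
        exact Finset.sum_congr rfl fun w _ => by ring

theorem two_mul_dotProduct_mulVec (h : IsReversible Q π) (hrow : ∀ v, ∑ w, Q v w = 1)
    (x : V → ℝ) :
    2 * x ⬝ᵥ ((diagonal π * (1 - Q)) *ᵥ x) = ∑ v, ∑ w, π v * Q v w * (x v - x w) ^ 2 := by
  have hswap : ∑ v, ∑ w, π v * Q v w * (x v * (x v - x w))
      = ∑ v, ∑ w, π v * Q v w * (x w * (x w - x v)) := by
    rw [Finset.sum_comm]
    simp only [h _ _]
  have hform : x ⬝ᵥ ((diagonal π * (1 - Q)) *ᵥ x)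
      = ∑ v, ∑ w, π v * Q v w * (x v * (x v - x w)) := by
    simp only [dotProduct, diagonal_mul_one_sub_mulVec_apply hrow, Finset.mul_sum]
    exact Finset.sum_congr rfl fun v _ => Finset.sum_congr rfl fun w _ => by ring
  rw [two_mul, hform]
  nth_rewrite 2 [hswap]
  simp only [← Finset.sum_add_distrib]
  exact Finset.sum_congr rfl fun v _ => Finset.sum_congr rfl fun w _ => by ring

theorem dotProduct_mulVec_nonneg (h : IsReversible Q π) (hQ : Q ∈ rowStochastic ℝ V)
    (hπ : ∀ v, 0 ≤ π v) (x : V → ℝ) : 0 ≤ x ⬝ᵥ ((diagonal π * (1 - Q)) *ᵥ x) := by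
  have h2 := h.two_mul_dotProduct_mulVec (sum_row_of_mem_rowStochastic hQ) x
  have : 0 ≤ ∑ v, ∑ w, π v * Q v w * (x v - x w) ^ 2 :=
    Finset.sum_nonneg fun v _ => Finset.sum_nonneg fun w _ =>
      mul_nonneg (mul_nonneg (hπ v) (nonneg_of_mem_rowStochastic hQ)) (sq_nonneg _)
  linarith

theorem dotProduct_mulVec_le (h : IsReversible Q π) (hQ : Q ∈ rowStochastic ℝ V)
    (hπ : ∀ v, 0 ≤ π v) (x : V → ℝ) :
    x ⬝ᵥ ((diagonal π * (1 - Q)) *ᵥ x) ≤ 2 * ∑ v, π v * x v ^ 2 := by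
  have hrow := sum_row_of_mem_rowStochastic hQ
  have hleft : ∑ v, ∑ w, π v * Q v w * x v ^ 2 = ∑ v, π v * x v ^ 2 :=
    Finset.sum_congr rfl fun v _ => by rw [← Finset.sum_mul, ← Finset.mul_sum, hrow, mul_one]
  have hright : ∑ v, ∑ w, π v * Q v w * x w ^ 2 = ∑ v, π v * x v ^ 2 := by
    rw [Finset.sum_comm]
    exact Finset.sum_congr rfl fun w _ => by rw [← Finset.sum_mul, h.sum_mul_apply hrow]
  have hsq : ∑ v, ∑ w, π v * Q v w * (x v - x w) ^ 2
      ≤ ∑ v, ∑ w, π v * Q v w * (2 * x v ^ 2 + 2 * x w ^ 2) :=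
    Finset.sum_le_sum fun v _ => Finset.sum_le_sum fun w _ =>
      mul_le_mul_of_nonneg_left (by nlinarith [sq_nonneg (x v + x w)])
        (mul_nonneg (hπ v) (nonneg_of_mem_rowStochastic hQ))
  simp only [mul_add, Finset.sum_add_distrib, mul_left_comm _ (2 : ℝ), ← Finset.mul_sum,
    hleft, hright] at hsq
  linarith [h.two_mul_dotProduct_mulVec hrow x]

end IsReversible

end Reversible

theorem orthogonal_ker_diagonal_mul_one_sub {V : Type*} [Fintype V] [DecidableEq V]
    {Q : Matrix V V ℝ} {s π ξ : V → ℝ} (hs : ∀ v, s v ≠ 0) (hπ : ∀ v, π v ≠ 0)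
    (hker : ∀ y : V → ℝ,
      ((1 : Matrix V V ℝ) - diagonal s * Q * diagonal (fun v => (s v)⁻¹)) *ᵥ y = 0 →
      (fun v => (s v)⁻¹ * ξ v) ⬝ᵥ y = 0)
    (z : V → ℝ) (hz : (diagonal π * (1 - Q)) *ᵥ z = 0) : ξ ⬝ᵥ z = 0 := by
  have hinv : diagonal (fun v => (s v)⁻¹) * diagonal s = 1 := by
    rw [diagonal_mul_diagonal, ← diagonal_one]
    exact congrArg diagonal (funext fun v => inv_mul_cancel₀ (hs v))
  have hconj : ((1 : Matrix V V ℝ) - diagonal s * Q * diagonal (fun v => (s v)⁻¹)) * diagonal s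
      = diagonal s * (1 - Q) := by
    rw [sub_mul, one_mul, mul_assoc, hinv, mul_one, mul_sub, mul_one]
  have hQz : (1 - Q) *ᵥ z = 0 := by
    rw [← mulVec_mulVec] at hz
    funext v
    have hv := congrFun hz v
    rw [mulVec_diagonal] at hv
    exact (mul_eq_zero.mp hv).resolve_left (hπ v)
  calc ξ ⬝ᵥ z = (fun v => (s v)⁻¹ * ξ v) ⬝ᵥ (diagonal s *ᵥ z) := by
        simp only [dotProduct, mulVec_diagonal]
        exact Finset.sum_congr rfl fun v _ => by field_simp [hs v]
    _ = 0 := hker _ (by rw [mulVec_mulVec, hconj, ← mulVec_mulVec, hQz, mulVec_zero])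

theorem sum_sq_div_add_le_of_mulVec_eq_sub {V : Type*} [Fintype V] {L : Matrix V V ℝ}
    {π σ ν u : V → ℝ} (hL : L.IsSymm) (hpos : ∀ x, 0 ≤ x ⬝ᵥ (L *ᵥ x))
    (hle : ∀ x, x ⬝ᵥ (L *ᵥ x) ≤ 2 * ∑ v, π v * x v ^ 2)
    (hσ : ∀ v, 0 ≤ σ v) (hσsum : ∑ v, σ v = 1) (hu : L *ᵥ u = σ - ν) :
    ∑ v, ν v ^ 2 / (σ v + π v) ≤ 1 + 2 * u ⬝ᵥ (L *ᵥ u) := by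
  set y : V → ℝ := fun v => ν v / (σ v + π v)
  have hνy : ν ⬝ᵥ y = ∑ v, ν v ^ 2 / (σ v + π v) :=
    Finset.sum_congr rfl fun v _ => by rw [sq, mul_div_assoc]
  have hweight : ∑ v, σ v * y v ^ 2 + ∑ v, π v * y v ^ 2 = ∑ v, ν v ^ 2 / (σ v + π v) := by
    rw [← Finset.sum_add_distrib]
    refine Finset.sum_congr rfl fun v _ => ?_
    rw [← add_mul]
    by_cases hv : σ v + π v = 0
    · simp [y, hv]
    · simp only [y]
      field_simp
  have hσy : σ ⬝ᵥ y ≤ (1 + ∑ v, σ v * y v ^ 2) / 2 := by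
    calc σ ⬝ᵥ y ≤ ∑ v, σ v * ((1 + y v ^ 2) / 2) :=
          Finset.sum_le_sum fun v _ =>
            mul_le_mul_of_nonneg_left (by nlinarith [sq_nonneg (y v - 1)]) (hσ v)
      _ = (∑ v, σ v + ∑ v, σ v * y v ^ 2) / 2 := by
          rw [← Finset.sum_add_distrib, Finset.sum_div]
          exact Finset.sum_congr rfl fun v _ => by ring
      _ = (1 + ∑ v, σ v * y v ^ 2) / 2 := by rw [hσsum]
  have hξy : -((σ - ν) ⬝ᵥ y) ≤ u ⬝ᵥ (L *ᵥ u) + (∑ v, π v * y v ^ 2) / 2 := by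
    rw [← hu, hL.mulVec_dotProduct]
    linarith [hL.neg_dotProduct_mulVec_le hpos u y, hle y]
  rw [sub_dotProduct, hνy] at hξy
  linarith

theorem checking_cost_vs_effective_resistance_general
    {V : Type*} [Fintype V] [DecidableEq V]
    (P : Matrix V V ℝ) (π : V → ℝ)
    (hPnonneg : ∀ v w, 0 ≤ P v w) (hProw : ∀ v, ∑ w, P v w = 1)
    (hπpos : ∀ v, 0 < π v)
    (hrev : ∀ v w, π v * P v w = π w * P w v)
    (t : ℕ)
    (M : Finset V)
    (σ ν : V → ℝ)
    (hσnonneg : ∀ v, 0 ≤ σ v) (hσsum : ∑ v, σ v = 1)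
    (ξ : V → ℝ) (hξ : ξ = σ - ν)
    (hker : ∀ y : V → ℝ,
      ((1 : Matrix V V ℝ) -
          diagonal (fun v => Real.sqrt (π v)) * (P ^ t) *
            diagonal (fun v => (Real.sqrt (π v))⁻¹)) *ᵥ y = 0 →
      (fun v => (Real.sqrt (π v))⁻¹ * ξ v) ⬝ᵥ y = 0)
    (Ltplus : Matrix V V ℝ)
    (hLtplus : IsMoorePenrose (diagonal π * (1 - P ^ t)) Ltplus) :
    ∑ v ∈ M, (ν v) ^ 2 / (σ v + π v) ≤ 2 * (1 + ξ ⬝ᵥ (Ltplus *ᵥ ξ)) := by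
  have hQ : P ^ t ∈ rowStochastic ℝ V :=
    pow_mem (mem_rowStochastic_iff_sum.mpr ⟨hPnonneg, hProw⟩) t
  have hrevQ : IsReversible (P ^ t) π := IsReversible.pow hrev t
  have hπ : ∀ v, 0 ≤ π v := fun v => (hπpos v).le
  have hL := hrevQ.isSymm_diagonal_mul_one_sub
  have hξL : (diagonal π * (1 - P ^ t)) *ᵥ (Ltplus *ᵥ ξ) = ξ :=
    hL.mulVec_mulVec_eq_self hLtplus.1 hLtplus.2.2.1 <|
      orthogonal_ker_diagonal_mul_one_sub (fun v => (Real.sqrt_pos.2 (hπpos v)).ne')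
        (fun v => (hπpos v).ne') hker
  have hM : ∑ v ∈ M, ν v ^ 2 / (σ v + π v) ≤ ∑ v, ν v ^ 2 / (σ v + π v) :=
    Finset.sum_le_sum_of_subset_of_nonneg (Finset.subset_univ M) fun v _ _ =>
      div_nonneg (sq_nonneg _) (add_nonneg (hσnonneg v) (hπ v))
  have hV := sum_sq_div_add_le_of_mulVec_eq_sub hL (hrevQ.dotProduct_mulVec_nonneg hQ hπ)
    (hrevQ.dotProduct_mulVec_le hQ hπ) hσnonneg hσsum (hξL.trans hξ)
  rw [hL.dotProduct_mulVec_eq hLtplus.1 hξL]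
  linarith

/-- For an irreducible, reversible Markov chain `P` with stationary
distribution `π`, an integer `t ≥ 1`, a marked set `M ⊆ V`, a probability vector `σ` and a
probability vector `ν` supported on `M`, with `ξ := σ - ν` such that `D^{-1/2} ξ` is
orthogonal to the kernel of `I - D^{1/2} P^t D^{-1/2}`, we have
`Σ_{v ∈ M} ν_v² / (σ_v + π_v) ≤ 2 (1 + ξᵀ (D(I - P^t))⁺ ξ)`. -/
theorem checking_cost_vs_effective_resistance
    {V : Type*} [Fintype V] [DecidableEq V] [Nonempty V]
    (P : Matrix V V ℝ) (π : V → ℝ)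
    (hPnonneg : ∀ v w, 0 ≤ P v w) (hProw : ∀ v, ∑ w, P v w = 1)
    (hirr : ∀ v w, ∃ t : ℕ, 1 ≤ t ∧ 0 < (P ^ t) v w)
    (hπpos : ∀ v, 0 < π v) (hπsum : ∑ v, π v = 1)
    (hrev : ∀ v w, π v * P v w = π w * P w v)
    (t : ℕ) (ht : 1 ≤ t)
    (M : Finset V)
    (σ ν : V → ℝ)
    (hσnonneg : ∀ v, 0 ≤ σ v) (hσsum : ∑ v, σ v = 1)
    (hνnonneg : ∀ v, 0 ≤ ν v) (hνsum : ∑ v, ν v = 1)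
    (hνsupp : ∀ v ∉ M, ν v = 0)
    (ξ : V → ℝ) (hξ : ξ = σ - ν)
    (hker : ∀ y : V → ℝ,
      ((1 : Matrix V V ℝ) -
          diagonal (fun v => Real.sqrt (π v)) * (P ^ t) *
            diagonal (fun v => (Real.sqrt (π v))⁻¹)) *ᵥ y = 0 →
      (fun v => (Real.sqrt (π v))⁻¹ * ξ v) ⬝ᵥ y = 0)
    (Ltplus : Matrix V V ℝ)
    (hLtplus : IsMoorePenrose (diagonal π * (1 - P ^ t)) Ltplus) :
    ∑ v ∈ M, (ν v) ^ 2 / (σ v + π v) ≤ 2 * (1 + ξ ⬝ᵥ (Ltplus *ᵥ ξ)) :=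
  checking_cost_vs_effective_resistance_general P π hPnonneg hProw hπpos hrev t M σ ν hσnonneg hσsum
    ξ hξ hker Ltplus hLtplus
end

section
/- Let k ≥ 2 be an integer and α ≥ 1 a real number. Define v ∈ ℝ^k by v_1 = α^{-1/2} and v_j = α^{1/2} for 2 ≤ j ≤ k; let X := v vᵀ; and let Y ∈ ℝ^{k×k} be given by Y_{ij} = α − 1 if both i ≥ 2 and j ≥ 2, and Y_{ij} = 0 otherwise. Then: X and Y are positive semidefinite; X_{ij} − Y_{ij} = 1 for all i ≠ j; X_{11} + Y_{11} = 1/α; and X_{jj} + Y_{jj} = 2α − 1 for every j ≥ 2. -/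
/-! Both matrices are Gram matrices of a single vector — `X` of `v`, and `Y` of the vector equal to
`√(α - 1)` off the distinguished index and `0` on it — hence positive semidefinite; the entry
identities reduce to `√α * √α = α`. -/

open Matrix

theorem posSemidef_vecMulVec_self {n R : Type*} [Finite n] [Ring R] [PartialOrder R] [StarRing R]
    [StarOrderedRing R] [TrivialStar R] (v : n → R) : (vecMulVec v v).PosSemidef := by
  simpa only [star_trivial] using posSemidef_vecMulVec_self_star v

theorem posSemidef_const_off_row_col {n : Type*} [Finite n] [DecidableEq n] (z : n) {c : ℝ}
    (hc : 0 ≤ c) : (of fun i j => if i ≠ z ∧ j ≠ z then c else 0).PosSemidef := by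
  convert posSemidef_vecMulVec_self fun i => if i = z then 0 else √c using 1
  ext i j
  by_cases hi : i = z <;> by_cases hj : j = z <;> simp [hi, hj, vecMulVec_apply, hc]

theorem decision_tree_sdp_solution_general
    (k : ℕ) (α : ℝ) (hα : 1 ≤ α)
    (z : Fin k)
    (v : Fin k → ℝ)
    (hv : ∀ j, v j = if j = z then (Real.sqrt α)⁻¹ else Real.sqrt α)
    (X Y : Matrix (Fin k) (Fin k) ℝ)
    (hX : X = vecMulVec v v)
    (hY : ∀ i j, Y i j = if i ≠ z ∧ j ≠ z then α - 1 else 0) :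
    X.PosSemidef ∧ Y.PosSemidef ∧
    (∀ i j, i ≠ j → X i j - Y i j = 1) ∧
    X z z + Y z z = 1 / α ∧
    (∀ j, j ≠ z → X j j + Y j j = 2 * α - 1) := by
  have hsqrt : √α * √α = α := Real.mul_self_sqrt (by linarith)
  have hsqrt0 : √α ≠ 0 := by positivity
  have hXv : ∀ i j, X i j = v i * v j := fun i j => by rw [hX, vecMulVec_apply]
  refine ⟨hX ▸ posSemidef_vecMulVec_self v,
    Matrix.ext hY ▸ posSemidef_const_off_row_col z (sub_nonneg.mpr hα), ?_, ?_, ?_⟩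
  · intro i j hij
    rw [hXv, hY, hv, hv]
    rcases eq_or_ne i z with rfl | hi
    · simp [hij.symm, hsqrt0]
    rcases eq_or_ne j z with rfl | hj
    · simp [hi, hsqrt0]
    · simp [hi, hj, hsqrt]
  · rw [hXv, hY, hv]
    simp [← mul_inv, hsqrt]
  · intro j hj
    rw [hXv, hY, hv, if_neg hj, if_pos ⟨hj, hj⟩, hsqrt]
    ring

/-- explicit feasible solution to the per-node SDP of the decision-tree
weighting scheme.  For `k ≥ 2` and `α ≥ 1`, let `v ∈ ℝ^k` have `v_1 = α^{-1/2}` and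
`v_j = α^{1/2}` for `j ≥ 2`, let `X := v vᵀ`, and let `Y` have entries `α - 1` in the lower
`(k-1) × (k-1)` block and `0` elsewhere.  Then `X, Y ⪰ 0`, `X_{ij} - Y_{ij} = 1` for `i ≠ j`,
`X_{11} + Y_{11} = 1/α`, and `X_{jj} + Y_{jj} = 2α - 1` for `j ≥ 2`.  (Indices are shifted:
the distinguished index `1` of the statement is the index `z : Fin k` with `(z : ℕ) = 0`.) -/
theorem decision_tree_sdp_solution
    (k : ℕ) (hk : 2 ≤ k) (α : ℝ) (hα : 1 ≤ α)
    (z : Fin k) (hz : (z : ℕ) = 0)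
    (v : Fin k → ℝ)
    (hv : ∀ j, v j = if j = z then (Real.sqrt α)⁻¹ else Real.sqrt α)
    (X Y : Matrix (Fin k) (Fin k) ℝ)
    (hX : X = vecMulVec v v)
    (hY : ∀ i j, Y i j = if i ≠ z ∧ j ≠ z then α - 1 else 0) :
    X.PosSemidef ∧ Y.PosSemidef ∧
    (∀ i j, i ≠ j → X i j - Y i j = 1) ∧
    X z z + Y z z = 1 / α ∧
    (∀ j, j ≠ z → X j j + Y j j = 2 * α - 1) :=
  decision_tree_sdp_solution_general k α hα z v hv X Y hX hY
end
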